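/- arXiv:2505.08280 — 7 statements merged into one kernel-verified Lean document; each statement's English description precedes it below -/
import Mathlib

section
/- Let Ω be a nonempty set, let K be a field, and let ℓ ≥ 1 be an integer. Let β : Ω → K be a function and let F be a K-linear subspace of the space of all functions Ω → K with dim_K F = ℓ + 1. Assume that for every linear subspace V ⊆ F with dim_K V = ℓ there exist an integer r ≥ 1 and functions f₁, …, f_r ∈ V such that β(x) = f₁(x)² + ⋯ + f_r(x)² for all x ∈ Ω. Then β is identically zero. -/
/-! Evaluation at a point `x` is a linear functional on `F`, so `F` has an `ℓ`-dimensional subspace of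
functions vanishing at `x`. Writing `β` as a sum of squares of elements of that subspace gives `β x = 0`. -/

open Module

namespace Submodule

variable {K M : Type*} [DivisionRing K] [AddCommGroup M] [Module K M]

theorem exists_le_finrank_eq (U : Submodule K M) [FiniteDimensional K U] {n : ℕ}
    (hn : n ≤ finrank K U) : ∃ V ≤ U, finrank K V = n := by
  let b := finBasis K U
  refine ⟨span K (Set.range (U.subtype ∘ b ∘ Fin.castLE hn)), ?_, ?_⟩
  · rw [span_le]
    rintro _ ⟨i, rfl⟩
    exact (b _).2
  · rw [finrank_span_eq_card ((b.linearIndependent.comp _ (Fin.castLE_injective hn)).map' _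
      U.ker_subtype)]
    exact Fintype.card_fin n

theorem finrank_le_finrank_inf_ker_add_one (U : Submodule K M) [FiniteDimensional K U]
    (φ : M →ₗ[K] K) : finrank K U ≤ finrank K ↥(U ⊓ LinearMap.ker φ) + 1 := by
  have hker : (LinearMap.ker (φ ∘ₗ U.subtype)).map U.subtype = U ⊓ LinearMap.ker φ := by
    rw [LinearMap.ker_comp, map_comap_subtype]
  have hrange : finrank K (LinearMap.range (φ ∘ₗ U.subtype)) ≤ 1 :=
    (Submodule.finrank_le _).trans (finrank_self K).le
  rw [← hker, finrank_map_subtype_eq, ← LinearMap.finrank_range_add_finrank_ker (φ ∘ₗ U.subtype)]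
  omega

end Submodule

theorem stmt0_general {Ω K : Type*} [Field K] (ℓ : ℕ)
    (β : Ω → K) (F : Submodule K (Ω → K))
    (hF : Module.finrank K F = ℓ + 1)
    (h : ∀ V : Submodule K (Ω → K), V ≤ F → Module.finrank K V = ℓ →
      ∃ (r : ℕ) (f : Fin r → Ω → K), 1 ≤ r ∧ (∀ i, f i ∈ V) ∧
        ∀ x : Ω, β x = ∑ i, (f i x) ^ 2) :
    β = 0 := by
  have : FiniteDimensional K F := .of_finrank_eq_succ hF
  funext x
  obtain ⟨V, hV, hVrank⟩ := (F ⊓ LinearMap.ker (LinearMap.proj x)).exists_le_finrank_eq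
    (n := ℓ) (by have := F.finrank_le_finrank_inf_ker_add_one (LinearMap.proj x); omega)
  obtain ⟨r, f, -, hfV, hβ⟩ := h V (hV.trans inf_le_left) hVrank
  have hfx (i : Fin r) : f i x = 0 := (hV (hfV i)).2
  simp [hβ x, hfx]

/-- Lemma 7.1: if every `ℓ`-dimensional subspace `V` of an `(ℓ+1)`-dimensional subspace `F`
of functions `Ω → K` contains a finite family whose pointwise sum of squares is `β`,
then `β ≡ 0`. -/
theorem stmt0 {Ω K : Type*} [Nonempty Ω] [Field K] (ℓ : ℕ) (hℓ : 1 ≤ ℓ)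
    (β : Ω → K) (F : Submodule K (Ω → K))
    (hF : Module.finrank K F = ℓ + 1)
    (h : ∀ V : Submodule K (Ω → K), V ≤ F → Module.finrank K V = ℓ →
      ∃ (r : ℕ) (f : Fin r → Ω → K), 1 ≤ r ∧ (∀ i, f i ∈ V) ∧
        ∀ x : Ω, β x = ∑ i, (f i x) ^ 2) :
    β = 0 :=
  stmt0_general ℓ β F hF h
end

section
/- Let Ω be a set, let ℓ ≥ 1 be an integer, and let F be an ℓ-dimensional real linear subspace of the space of all functions Ω → ℝ. Let b be a symmetric bilinear form on F that is positive definite. Then the convex hull, in the real vector space of functions Ω → ℝ, of the set { v·v : v ∈ F, b(v,v) = 1 } equals the set of all functions of the form ∑_{i=1}^{ℓ} d_i (v_i·v_i), where d₁, …, d_ℓ are nonnegative reals with ∑_{i=1}^{ℓ} d_i = 1 and (v₁, …, v_ℓ) is a basis of F orthonormal with respect to b (i.e. b(v_i, v_j) = δ_{ij}). Here v·w denotes the pointwise product of functions, so v·v is the pointwise square. -/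
/-!
A convex combination `∑ cₖ wₖ²` of squares of unit vectors depends only on the positive operator
`T = ∑ cₖ ⟪wₖ, ·⟫ wₖ`, whose trace is `∑ cₖ = 1`. Expanding it in an orthonormal eigenbasis `(vᵢ)`
of `T` turns it into `∑ μᵢ vᵢ²`, where the eigenvalues `μᵢ` are nonnegative and sum to the trace.
Positive definiteness of `b` makes it an inner product, so that the spectral theorem applies.
-/

open scoped RealInnerProductSpace
open InnerProductSpace Finset

namespace OrthonormalBasis

variable {ι E G : Type*} [Fintype ι] [NormedAddCommGroup E] [InnerProductSpace ℝ E]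
  [AddCommGroup G] [Module ℝ G]

/-- `m` applied to the tensor `∑ ⟪eᵢ, S eⱼ⟫ eᵢ ⊗ eⱼ` representing `S`; by
`bilinContraction_rankOne` it does not depend on `e`. -/
noncomputable def bilinContraction (e : OrthonormalBasis ι ℝ E) (m : E →ₗ[ℝ] E →ₗ[ℝ] G) :
    (E →ₗ[ℝ] E) →ₗ[ℝ] G where
  toFun S := ∑ i, ∑ j, ⟪e i, S (e j)⟫ • m (e i) (e j)
  map_add' S T := by simp only [LinearMap.add_apply, inner_add_right, add_smul, sum_add_distrib]
  map_smul' c S := by simp only [LinearMap.smul_apply, inner_smul_right, mul_smul, smul_sum,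
    RingHom.id_apply]

theorem bilinContraction_apply (e : OrthonormalBasis ι ℝ E) (m : E →ₗ[ℝ] E →ₗ[ℝ] G)
    (S : E →ₗ[ℝ] E) :
    e.bilinContraction m S = ∑ i, ∑ j, ⟪e i, S (e j)⟫ • m (e i) (e j) := rfl

theorem bilinContraction_rankOne (e : OrthonormalBasis ι ℝ E) (m : E →ₗ[ℝ] E →ₗ[ℝ] G) (x y : E) :
    e.bilinContraction m (rankOne ℝ x y) = m x y := by
  conv_rhs => rw [← e.sum_repr' x, ← e.sum_repr' y]
  simp only [bilinContraction_apply, ContinuousLinearMap.coe_coe, rankOne_apply,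
    inner_smul_right, map_sum, map_smul, LinearMap.sum_apply, LinearMap.smul_apply,
    smul_sum, smul_smul]
  rw [sum_comm]
  simp only [real_inner_comm y]

theorem bilinContraction_eigenvectorBasis [FiniteDimensional ℝ E] {n : ℕ}
    (hn : Module.finrank ℝ E = n) {T : E →ₗ[ℝ] E} (hT : T.IsSymmetric)
    (m : E →ₗ[ℝ] E →ₗ[ℝ] G) :
    (hT.eigenvectorBasis hn).bilinContraction m T
      = ∑ i, hT.eigenvalues hn i • m (hT.eigenvectorBasis hn i) (hT.eigenvectorBasis hn i) := by
  simp only [bilinContraction_apply, hT.apply_eigenvectorBasis, inner_smul_right,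
    OrthonormalBasis.inner_eq_ite, mul_ite, mul_one, mul_zero, ite_smul, zero_smul,
    sum_ite_eq, mem_univ, if_true]
  rfl

end OrthonormalBasis

section ConvexHull

variable {E G : Type*} [NormedAddCommGroup E] [InnerProductSpace ℝ E] [FiniteDimensional ℝ E]
  [AddCommGroup G] [Module ℝ G] {n : ℕ}

theorem exists_orthonormalBasis_sum_smul_bilin_self_eq (hn : Module.finrank ℝ E = n)
    (m : E →ₗ[ℝ] E →ₗ[ℝ] G) {ι : Type*} [Fintype ι] {c : ι → ℝ} {w : ι → E}
    (hc : ∀ k, 0 ≤ c k) (hcsum : ∑ k, c k = 1) (hw : ∀ k, ‖w k‖ = 1) :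
    ∃ (d : Fin n → ℝ) (v : OrthonormalBasis (Fin n) ℝ E), (∀ i, 0 ≤ d i) ∧ ∑ i, d i = 1 ∧
      ∑ k, c k • m (w k) (w k) = ∑ i, d i • m (v i) (v i) := by
  set T : E →ₗ[ℝ] E := ∑ k, c k • (rankOne ℝ (w k) (w k) : E →ₗ[ℝ] E)
  have hT : T.IsPositive :=
    LinearMap.isPositive_sum _ fun k _ => (isPositive_rankOne_self (w k)).smul_of_nonneg (hc k)
  have htrace : ∑ i, hT.isSymmetric.eigenvalues hn i = 1 := by
    rw [← hT.isSymmetric.re_trace_eq_sum_eigenvalues hn]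
    simp [T, trace_rankOne, hw, hcsum]
  refine ⟨_, hT.isSymmetric.eigenvectorBasis hn, hT.nonneg_eigenvalues hn, htrace, ?_⟩
  rw [← OrthonormalBasis.bilinContraction_eigenvectorBasis hn hT.isSymmetric m]
  simp only [T, map_sum, map_smul, OrthonormalBasis.bilinContraction_rankOne]

theorem convexHull_bilin_self_norm_eq_one (hn : Module.finrank ℝ E = n)
    (m : E →ₗ[ℝ] E →ₗ[ℝ] G) :
    convexHull ℝ {g : G | ∃ v : E, ‖v‖ = 1 ∧ g = m v v}
      = {g : G | ∃ (d : Fin n → ℝ) (v : Module.Basis (Fin n) ℝ E),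
          (∀ i, 0 ≤ d i) ∧ ∑ i, d i = 1 ∧ Orthonormal ℝ v ∧ g = ∑ i, d i • m (v i) (v i)} := by
  apply Set.Subset.antisymm
  · intro g hg
    obtain ⟨ι, _, c, z, hc, hcsum, hz, rfl⟩ := mem_convexHull_iff_exists_fintype.mp hg
    choose w hw hwz using hz
    obtain ⟨d, v, hd, hdsum, hsum⟩ :=
      exists_orthonormalBasis_sum_smul_bilin_self_eq hn m hc hcsum hw
    refine ⟨d, v.toBasis, hd, hdsum, v.coe_toBasis ▸ v.orthonormal, ?_⟩
    simpa [hwz] using hsum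
  · rintro g ⟨d, v, hd, hdsum, hv, rfl⟩
    exact (convex_convexHull ℝ _).sum_mem (fun i _ => hd i) hdsum
      fun i _ => subset_convexHull ℝ _ ⟨v i, hv.1 i, rfl⟩

end ConvexHull

noncomputable abbrev innerProductSpaceCoreOfPosDef {V : Type*} [AddCommGroup V] [Module ℝ V]
    (b : V →ₗ[ℝ] V →ₗ[ℝ] ℝ) (hsymm : ∀ v w, b v w = b w v) (hpos : ∀ v, v ≠ 0 → 0 < b v v) :
    InnerProductSpace.Core ℝ V where
  inner v w := b v w
  conj_inner_symm v w := hsymm w v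
  re_inner_nonneg v := by
    rcases eq_or_ne v 0 with rfl | hv
    · simp
    · exact (hpos v hv).le
  definite v h := by
    by_contra hv
    exact (hpos v hv).ne' h
  add_left u v w := by simp
  smul_left u v r := by simp

/-- The mixing lemma: the convex hull of pointwise squares of `b`-unit vectors of an
`ℓ`-dimensional space `F` of functions equals the set of convex combinations
`∑ dᵢ vᵢ²` over `b`-orthonormal bases `(vᵢ)` of `F`. -/
theorem stmt1 {Ω : Type*} (ℓ : ℕ) (hℓ : 1 ≤ ℓ) (F : Submodule ℝ (Ω → ℝ))
    (hF : Module.finrank ℝ F = ℓ)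
    (b : F →ₗ[ℝ] F →ₗ[ℝ] ℝ)
    (hsymm : ∀ v w : F, b v w = b w v)
    (hpos : ∀ v : F, v ≠ 0 → 0 < b v v) :
    convexHull ℝ {g : Ω → ℝ | ∃ v : F, b v v = 1 ∧ g = (v : Ω → ℝ) * (v : Ω → ℝ)}
      = {g : Ω → ℝ | ∃ (d : Fin ℓ → ℝ) (v : Module.Basis (Fin ℓ) ℝ F),
          (∀ i, 0 ≤ d i) ∧ (∑ i, d i = 1) ∧
          (∀ i j, b (v i) (v j) = if i = j then 1 else 0) ∧
          g = ∑ i, d i • ((v i : Ω → ℝ) * (v i : Ω → ℝ))} := by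
  let core := innerProductSpaceCoreOfPosDef b hsymm hpos
  let _ : NormedAddCommGroup F := core.toNormedAddCommGroup
  let _ : InnerProductSpace ℝ F := InnerProductSpace.ofCore core.toCore
  have : FiniteDimensional ℝ F := .of_finrank_pos (by omega)
  have hnorm : ∀ v : F, ‖v‖ = 1 ↔ b v v = 1 := fun v => by
    rw [← pow_eq_one_iff_of_nonneg (norm_nonneg v) two_ne_zero, ← real_inner_self_eq_norm_sq]
    rfl
  have key := convexHull_bilin_self_norm_eq_one hF
    ((LinearMap.mul ℝ (Ω → ℝ)).compl₁₂ F.subtype F.subtype)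
  simp only [hnorm, orthonormal_iff_ite, LinearMap.compl₁₂_apply, LinearMap.mul_apply',
    Submodule.subtype_apply] at key
  exact key
end

section
/- For every integer n ≥ 7 there is a unique α₀ ∈ (0,1) such that F_n(α₀) = 0. Moreover F_n(α) < 0 for all α ∈ (0, α₀) and F_n(α) > 0 for all α ∈ (α₀, 1). -/
/-!
Taking logarithms of its two positive terms, `F_n(α)` has the sign of
`g(α) = log ((1 + α) / (1 - α)) - α log (n + 1)`. Since `g'(α) = 2 / (1 - α²) - log (n + 1)`
increases on `[0, 1)`, `g` is strictly convex there, and `g 0 = 0`; so once `g` is negative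
somewhere and positive further right, it has exactly one zero in `(0, 1)`, below which it is
negative and above which it is positive. For `n ≥ 7`, `g (1/10) < 0` because `(11/9)^10 < 8`,
and `g (1 - 1/(n+1)) > 0` because `(1 + α) / (1 - α) = 2n + 1` there.
-/

open Set

def HasUniqueSignChangeAt (f : ℝ → ℝ) (a b x₀ : ℝ) : Prop :=
  f x₀ = 0 ∧ (∀ x ∈ Ioo a b, f x = 0 → x = x₀) ∧
    (∀ x ∈ Ioo a x₀, f x < 0) ∧ ∀ x ∈ Ioo x₀ b, 0 < f x

section SignChange

variable {f g : ℝ → ℝ} {a b x₀ : ℝ}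

theorem HasUniqueSignChangeAt.congr_sign (h : HasUniqueSignChangeAt f a b x₀)
    (hx₀ : x₀ ∈ Ioo a b) (hfg : ∀ x ∈ Ioo a b, SignType.sign (g x) = SignType.sign (f x)) :
    HasUniqueSignChangeAt g a b x₀ := by
  obtain ⟨hzero, huniq, hneg, hpos⟩ := h
  refine ⟨?_, fun x hx hgx => huniq x hx ?_, fun x hx => ?_, fun x hx => ?_⟩
  · rw [← sign_eq_zero_iff, hfg x₀ hx₀, sign_eq_zero_iff.2 hzero]
  · rw [← sign_eq_zero_iff, ← hfg x hx, sign_eq_zero_iff.2 hgx]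
  · rw [← sign_eq_neg_one_iff, hfg x ⟨hx.1, hx.2.trans hx₀.2⟩,
      sign_eq_neg_one_iff.2 (hneg x hx)]
  · rw [← sign_eq_one_iff, hfg x ⟨hx₀.1.trans hx.1, hx.2⟩, sign_eq_one_iff.2 (hpos x hx)]

theorem StrictConvexOn.exists_hasUniqueSignChangeAt (hf : StrictConvexOn ℝ (Ico a b) f)
    (hfa : f a = 0) {c d : ℝ} (hac : a < c) (hcd : c < d) (hdb : d < b) (hfc : f c < 0)
    (hfd : 0 < f d) : ∃ x₀ ∈ Ioo a b, HasUniqueSignChangeAt f a b x₀ := by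
  have hcont : ContinuousOn f (Icc c d) := by
    refine hf.convexOn.continuousOn_interior.mono ?_
    rw [interior_Ico]
    exact Icc_subset_Ioo hac hdb
  obtain ⟨x₀, hx₀, hfx₀⟩ := intermediate_value_Ioo hcd.le hcont ⟨hfc, hfd⟩
  have hax₀ : a < x₀ := hac.trans hx₀.1
  have hx₀b : x₀ < b := hx₀.2.trans hdb
  have ha : a ∈ Ico a b := ⟨le_rfl, hax₀.trans hx₀b⟩
  have hneg : ∀ x ∈ Ioo a x₀, f x < 0 := fun x hx => by
    simpa [hfa, hfx₀] using hf.lt_on_openSegment ha ⟨hax₀.le, hx₀b⟩ hax₀.ne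
      (by rwa [openSegment_eq_Ioo hax₀])
  have hpos : ∀ x ∈ Ioo x₀ b, 0 < f x := fun x hx => by
    have hax : a < x := hax₀.trans hx.1
    have := hf.lt_on_openSegment ha ⟨hax.le, hx.2⟩ hax.ne
      (by rw [openSegment_eq_Ioo hax]; exact ⟨hax₀, hx.1⟩)
    simpa [hfa, hfx₀] using this
  refine ⟨x₀, ⟨hax₀, hx₀b⟩, hfx₀, fun x hx hfx => ?_, hneg, hpos⟩
  rcases lt_trichotomy x x₀ with hlt | heq | hgt
  · exact absurd hfx (hneg x ⟨hx.1, hlt⟩).ne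
  · exact heq
  · exact absurd hfx (hpos x ⟨hgt, hx.2⟩).ne'

end SignChange

theorem sign_sub_eq_sign_log_sub {u v : ℝ} (hu : 0 < u) (hv : 0 < v) :
    SignType.sign (u - v) = SignType.sign (Real.log u - Real.log v) := by
  rcases lt_trichotomy u v with h | rfl | h
  · rw [sign_neg (sub_neg.2 h), sign_neg (sub_neg.2 (Real.log_lt_log hu h))]
  · simp
  · rw [sign_pos (sub_pos.2 h), sign_pos (sub_pos.2 (Real.log_lt_log hv h))]

noncomputable def logGap (m α : ℝ) : ℝ := Real.log ((1 + α) / (1 - α)) - α * Real.log m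

theorem hasDerivAt_logGap (m : ℝ) {x : ℝ} (hx : x ∈ Ioo (-1 : ℝ) 1) :
    HasDerivAt (logGap m) (2 / (1 - x ^ 2) - Real.log m) x := by
  have h₁ : 1 + x ≠ 0 := by linarith [hx.1]
  have h₂ : 1 - x ≠ 0 := by linarith [hx.2]
  have hq : HasDerivAt (fun y => (1 + y) / (1 - y)) (2 / (1 - x) ^ 2) x := by
    refine HasDerivAt.congr_deriv
      (((hasDerivAt_id x).const_add 1).div ((hasDerivAt_id x).const_sub 1) h₂) ?_
    simp only [id]
    ring
  refine ((hq.log (div_ne_zero h₁ h₂)).sub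
    ((hasDerivAt_id x).mul_const (Real.log m))).congr_deriv ?_
  have h₃ : 1 - x ^ 2 ≠ 0 := by
    rw [show 1 - x ^ 2 = (1 + x) * (1 - x) by ring]; exact mul_ne_zero h₁ h₂
  field_simp
  ring

theorem strictConvexOn_logGap (m : ℝ) : StrictConvexOn ℝ (Ico 0 1) (logGap m) := by
  have hsub : Ico (0 : ℝ) 1 ⊆ Ioo (-1) 1 := fun x hx => ⟨by linarith [hx.1], hx.2⟩
  refine StrictMonoOn.strictConvexOn_of_deriv (convex_Ico 0 1)
    (fun x hx => (hasDerivAt_logGap m (hsub hx)).continuousAt.continuousWithinAt) ?_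
  rw [interior_Ico]
  intro x hx y hy hxy
  rw [(hasDerivAt_logGap m (hsub (Ioo_subset_Ico_self hx))).deriv,
    (hasDerivAt_logGap m (hsub (Ioo_subset_Ico_self hy))).deriv, sub_lt_sub_iff_right]
  have : 0 < 1 - y ^ 2 := by nlinarith [hy.1, hy.2]
  gcongr
  nlinarith [hx.1]

theorem logGap_zero (m : ℝ) : logGap m 0 = 0 := by simp [logGap]

theorem logGap_one_tenth_neg {m : ℝ} (hm : 8 ≤ m) : logGap m (1 / 10) < 0 := by
  have h : Real.log ((11 / 9) ^ 10) < Real.log m :=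
    Real.log_lt_log (by norm_num) (by linarith)
  rw [Real.log_pow] at h
  norm_num [logGap]
  linarith

theorem logGap_one_sub_inv_pos {m : ℝ} (hm : 1 < m) : 0 < logGap m (1 - m⁻¹) := by
  have hm₀ : 0 < m := by linarith
  have hq : (1 + (1 - m⁻¹)) / (1 - (1 - m⁻¹)) = 2 * m - 1 := by field_simp; ring
  have hlog : Real.log m < Real.log (2 * m - 1) := Real.log_lt_log hm₀ (by linarith)
  have : 0 < m⁻¹ * Real.log m := mul_pos (inv_pos.2 hm₀) (Real.log_pos hm)
  rw [logGap, hq]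
  linarith

theorem sign_div_sub_rpow_eq_sign_logGap {m α : ℝ} (hm : 0 < m) (hα : α ∈ Ioo (-1 : ℝ) 1) :
    SignType.sign ((1 + α) / (1 - α) - m ^ α) = SignType.sign (logGap m α) := by
  rw [logGap, ← Real.log_rpow hm]
  exact sign_sub_eq_sign_log_sub (div_pos (by linarith [hα.1]) (by linarith [hα.2]))
    (Real.rpow_pos_of_pos hm α)

/-- For `n ≥ 7` the function `F_n(α) = (1+α)/(1-α) - (n+1)^α` has a unique zero `α₀`
in `(0,1)`, is negative on `(0,α₀)` and positive on `(α₀,1)`. -/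
theorem stmt2 (n : ℕ) (hn : 7 ≤ n) :
    ∃ α₀ ∈ Set.Ioo (0 : ℝ) 1,
      (1 + α₀) / (1 - α₀) - ((n : ℝ) + 1) ^ α₀ = 0 ∧
      (∀ α ∈ Set.Ioo (0 : ℝ) 1, (1 + α) / (1 - α) - ((n : ℝ) + 1) ^ α = 0 → α = α₀) ∧
      (∀ α ∈ Set.Ioo (0 : ℝ) α₀, (1 + α) / (1 - α) - ((n : ℝ) + 1) ^ α < 0) ∧
      (∀ α ∈ Set.Ioo α₀ (1 : ℝ), 0 < (1 + α) / (1 - α) - ((n : ℝ) + 1) ^ α) := by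
  set m : ℝ := (n : ℝ) + 1
  have hm : (8 : ℝ) ≤ m := by
    have : (7 : ℝ) ≤ n := by exact_mod_cast hn
    linarith
  have hinv : m⁻¹ ≤ 8⁻¹ := inv_anti₀ (by norm_num) hm
  have hinv₀ : 0 < m⁻¹ := by positivity
  obtain ⟨α₀, hα₀, h⟩ := (strictConvexOn_logGap m).exists_hasUniqueSignChangeAt
    (logGap_zero m) (by norm_num) (by linarith) (by linarith)
    (logGap_one_tenth_neg hm) (logGap_one_sub_inv_pos (by linarith))
  exact ⟨α₀, hα₀, h.congr_sign hα₀ fun α hα =>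
    sign_div_sub_rpow_eq_sign_logGap (by linarith) ⟨by linarith [hα.1], hα.2⟩⟩
end

section
/- For every integer n ≥ 8 one has (n−2)/2 ≤ (n+1)^{1−4/n}, where the right-hand side denotes the real power exp((1−4/n)·log(n+1)). Equality holds for n = 8. -/
lemma aux_two_pow (n : ℕ) (hn : 17 ≤ n) : (n + 1)^4 ≤ 2^n := by
  induction n with
  | zero => omega
  | succ m ih =>
    rcases Nat.lt_or_ge m 17 with hm | hm
    · interval_cases m <;> first | omega | norm_num
    · have h := ih (by omega)
      have h2 : 18^4 * (m + 2)^4 ≤ 19^4 * (m + 1)^4 := by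
        have : 18 * (m + 2) ≤ 19 * (m + 1) := by omega
        calc 18^4 * (m + 2)^4 = (18 * (m + 2))^4 := by ring
          _ ≤ (19 * (m + 1))^4 := Nat.pow_le_pow_left this 4
          _ = 19^4 * (m + 1)^4 := by ring
      have h3 : 18^4 * (m + 2)^4 ≤ 18^4 * (2 * (m + 1)^4) := by
        calc 18^4 * (m + 2)^4 ≤ 19^4 * (m + 1)^4 := h2
          _ ≤ (18^4 * 2) * (m + 1)^4 := Nat.mul_le_mul (by norm_num) le_rfl
          _ = 18^4 * (2 * (m + 1)^4) := by ring
      have : (m + 2)^4 ≤ 2 * (m + 1)^4 := Nat.le_of_mul_le_mul_left h3 (by norm_num)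
      calc (m + 1 + 1)^4 ≤ 2 * (m + 1)^4 := this
        _ ≤ 2 * 2^m := by omega
        _ = 2^(m+1) := by ring

lemma aux_pow_ineq (n : ℕ) (hn : 8 ≤ n) :
    (((n : ℝ) - 2) / 2) ^ n ≤ ((n : ℝ) + 1) ^ (n - 4) := by
  rcases Nat.lt_or_ge n 17 with h | h
  · interval_cases n <;> norm_num
  · have h4 : ((n : ℝ) + 1)^4 ≤ 2^n := by
      have := aux_two_pow n h
      have := (Nat.cast_le (α := ℝ)).2 this
      push_cast at this
      convert this using 2
    have hn2 : (0:ℝ) ≤ (n : ℝ) - 2 := by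
      have : (8:ℝ) ≤ (n:ℝ) := by exact_mod_cast hn
      linarith
    have h1 : ((n : ℝ) - 2)^n ≤ ((n : ℝ) + 1)^n :=
      pow_le_pow_left₀ hn2 (by linarith) n
    have h2 : ((n : ℝ) + 1)^n = ((n : ℝ) + 1)^(n - 4) * ((n : ℝ) + 1)^4 := by
      rw [← pow_add]; congr 1; omega
    have hp : (0:ℝ) < ((n : ℝ) + 1)^(n-4) := by positivity
    rw [div_pow, div_le_iff₀ (by positivity)]
    calc ((n : ℝ) - 2)^n ≤ ((n : ℝ) + 1)^(n-4) * ((n : ℝ) + 1)^4 := by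
          rw [← h2]; exact h1
      _ ≤ ((n : ℝ) + 1)^(n-4) * 2^n := by
          exact mul_le_mul_of_nonneg_left h4 (le_of_lt hp)

/-- For every integer `n ≥ 8`, `(n-2)/2 ≤ (n+1)^(1 - 4/n)`, with equality for `n = 8`. -/
theorem stmt3 :
    (∀ n : ℕ, 8 ≤ n → ((n : ℝ) - 2) / 2 ≤ ((n : ℝ) + 1) ^ (1 - 4 / (n : ℝ))) ∧
    ((8 : ℝ) - 2) / 2 = ((8 : ℝ) + 1) ^ (1 - 4 / (8 : ℝ)) := by
  constructor
  · intro n hn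
    have hn0 : (n : ℝ) ≠ 0 := by positivity
    have hb : (0:ℝ) ≤ (n : ℝ) + 1 := by positivity
    have key : (((n:ℝ)+1) ^ (1 - 4/(n:ℝ)))^n = ((n:ℝ)+1)^((n - 4 : ℕ)) := by
      rw [← Real.rpow_natCast (((n:ℝ)+1) ^ (1 - 4/(n:ℝ))) n, ← Real.rpow_mul hb]
      rw [show (1 - 4/(n:ℝ)) * n = ((n - 4 : ℕ) : ℝ) by
        push_cast [Nat.cast_sub (by omega : 4 ≤ n)]
        field_simp]
      rw [Real.rpow_natCast]
    have hx : (0:ℝ) ≤ ((n : ℝ) - 2) / 2 := by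
      have : (8:ℝ) ≤ (n:ℝ) := by exact_mod_cast hn
      linarith
    have hy : (0:ℝ) ≤ ((n:ℝ)+1) ^ (1 - 4/(n:ℝ)) := Real.rpow_nonneg hb _
    have := aux_pow_ineq n hn
    rw [← key] at this
    exact le_of_pow_le_pow_left₀ (by omega) hy this
  · rw [show ((8:ℝ) + 1) = (3:ℝ) ^ ((2:ℕ):ℝ) from by rw [Real.rpow_natCast]; norm_num,
      ← Real.rpow_mul (by norm_num),
      show ((2:ℕ):ℝ) * (1 - 4/8) = 1 by norm_num, Real.rpow_one]
    norm_num
end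

section
/- For every integer n ≥ 8 and every real α ∈ (0,1) satisfying (1+α)/(1−α) = (n+1)^α, one has α ≥ 1 − 4/n. Here (n+1)^α = exp(α·log(n+1)) denotes the real power. -/
open Real Set

private lemma pow4_le_two_pow (n : ℕ) (hn : 17 ≤ n) : (n+1)^4 ≤ 2^n := by
  induction n, hn using Nat.le_induction with
  | base => norm_num
  | succ n hn ih =>
    have key : (n+2)^4 ≤ 2 * (n+1)^4 := by
      have h6 : 6*(n+2) ≤ 7*(n+1) := by omega
      have hp := Nat.pow_le_pow_left h6 4
      rw [mul_pow, mul_pow] at hp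
      have h2 : 7^4*(n+1)^4 ≤ 6^4*(2*(n+1)^4) := by
        calc 7^4*(n+1)^4 ≤ (6^4*2)*(n+1)^4 := Nat.mul_le_mul_right _ (by norm_num)
          _ = 6^4*(2*(n+1)^4) := by ring
      exact Nat.le_of_mul_le_mul_left (le_trans hp h2) (by norm_num)
    calc (n+1+1)^4 = (n+2)^4 := by ring_nf
    _ ≤ 2 * (n+1)^4 := key
    _ ≤ 2 * 2^n := by omega
    _ = 2^(n+1) := by ring

private lemma nat_key (n : ℕ) (hn : 8 ≤ n) :
    (n+1)^4 * (n-2)^n ≤ 2^n * (n+1)^n := by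
  rcases lt_or_ge n 17 with h17 | h17
  · interval_cases n <;> norm_num
  · have h1 : (n+1)^4 ≤ 2^n := pow4_le_two_pow n h17
    have h2 : (n-2)^n ≤ (n+1)^n := Nat.pow_le_pow_left (by omega) n
    exact Nat.mul_le_mul h1 h2

private lemma log_key (n : ℕ) (hn : 8 ≤ n) :
    Real.log ((n:ℝ) - 2) - Real.log 2 ≤ (1 - 4/(n:ℝ)) * Real.log ((n:ℝ)+1) := by
  have hn2 : (2:ℕ) ≤ n := by omega
  have hnR : (8:ℝ) ≤ (n:ℝ) := by exact_mod_cast hn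
  have hkey : ((n:ℝ)+1)^4 * ((n:ℝ)-2)^n ≤ 2^n * ((n:ℝ)+1)^n := by
    have := nat_key n hn
    have := (Nat.cast_le (α := ℝ)).2 this
    push_cast [Nat.cast_sub hn2] at this
    convert this using 2 <;> push_cast <;> ring
  have hp1 : (0:ℝ) < (n:ℝ)+1 := by linarith
  have hp2 : (0:ℝ) < (n:ℝ)-2 := by linarith
  have hlog := Real.log_le_log (by positivity) hkey
  rw [Real.log_mul (by positivity) (by positivity),
      Real.log_mul (by positivity) (by positivity),
      Real.log_pow, Real.log_pow, Real.log_pow, Real.log_pow] at hlog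
  have hnpos : (0:ℝ) < (n:ℝ) := by linarith
  push_cast at hlog
  refine le_of_mul_le_mul_right ?_ hnpos
  calc (Real.log ((n:ℝ)-2) - Real.log 2) * n = n*Real.log ((n:ℝ)-2) - n*Real.log 2 := by ring
    _ ≤ n*Real.log ((n:ℝ)+1) - 4*Real.log ((n:ℝ)+1) := by linarith
    _ = (1 - 4/(n:ℝ)) * Real.log ((n:ℝ)+1) * n := by field_simp

/-- For `n ≥ 8`, every zero `α ∈ (0,1)` of `F_n(α) = (1+α)/(1-α) - (n+1)^α`
satisfies `α ≥ 1 - 4/n`. -/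
theorem stmt4 (n : ℕ) (hn : 8 ≤ n) (α : ℝ) (hα : α ∈ Set.Ioo (0 : ℝ) 1)
    (h : (1 + α) / (1 - α) = ((n : ℝ) + 1) ^ α) :
    1 - 4 / (n : ℝ) ≤ α := by
  obtain ⟨hα0, hα1⟩ := hα
  by_contra hcon
  push_neg at hcon
  set β : ℝ := 1 - 4/(n:ℝ) with hβdef
  have hnR : (8:ℝ) ≤ (n:ℝ) := by exact_mod_cast hn
  have hnpos : (0:ℝ) < (n:ℝ) := by linarith
  have hβ0 : (0:ℝ) < β := by
    have : 4/(n:ℝ) ≤ 1/2 := by rw [div_le_div_iff₀ hnpos (by norm_num)]; linarith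
    simp only [hβdef]; linarith
  have hβ1 : β < 1 := by
    have : 0 < 4/(n:ℝ) := by positivity
    simp only [hβdef]; linarith
  set L : ℝ := Real.log ((n:ℝ)+1) with hLdef
  set f : ℝ → ℝ := fun x => Real.log (1+x) - Real.log (1-x) with hfdef
  -- f α = α * L
  have h1α : (0:ℝ) < 1 + α := by linarith
  have h2α : (0:ℝ) < 1 - α := by linarith
  have hfα : f α = α * L := by
    have := congrArg Real.log h
    rw [Real.log_div h1α.ne' h2α.ne', Real.log_rpow (by linarith)] at this
    simpa [hfdef, hLdef] using this
  -- f β ≤ β * L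
  have hfβ : f β ≤ β * L := by
    have e1 : 1 + β = 2 * ((n:ℝ)-2) / n := by
      simp only [hβdef]; field_simp; ring
    have e2 : 1 - β = 4 / (n:ℝ) := by simp only [hβdef]; ring
    have hp2 : (0:ℝ) < (n:ℝ)-2 := by linarith
    have hlog4 : Real.log (4:ℝ) = 2 * Real.log 2 := by
      rw [show (4:ℝ) = 2^2 by norm_num, Real.log_pow]; push_cast; ring
    have : f β = Real.log ((n:ℝ)-2) - Real.log 2 := by
      simp only [hfdef, e1, e2]
      rw [Real.log_div (by positivity) hnpos.ne', Real.log_div (by positivity) hnpos.ne',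
        Real.log_mul (by norm_num) hp2.ne', hlog4]
      have : Real.log (2:ℝ) = Real.log 2 := rfl
      ring
    rw [this]
    simpa [hβdef, hLdef] using log_key n hn
  -- strict convexity of f on [0, β]
  have hconv : StrictConvexOn ℝ (Icc (0:ℝ) β) f := by
    have hderiv : ∀ x ∈ Ioo (-1:ℝ) 1,
        HasDerivAt f ((1+x)⁻¹ + (1-x)⁻¹) x := by
      intro x hx
      have hx1 : (0:ℝ) < 1 + x := by linarith [hx.1]
      have hx2 : (0:ℝ) < 1 - x := by linarith [hx.2]
      have A : HasDerivAt (fun y : ℝ => 1 + y) 1 x := (hasDerivAt_id x).const_add 1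
      have B : HasDerivAt (fun y : ℝ => 1 - y) (-1) x := (hasDerivAt_id x).const_sub 1
      have hA := (Real.hasDerivAt_log hx1.ne').comp x A
      have hB := (Real.hasDerivAt_log hx2.ne').comp x B
      have hsum := hA.sub hB
      rw [show (1+x)⁻¹ * 1 - (1-x)⁻¹ * (-1) = (1+x)⁻¹ + (1-x)⁻¹ from by ring] at hsum
      exact hsum
    apply strictConvexOn_of_deriv2_pos (convex_Icc 0 β)
    · intro x hx
      have hx1 : -1 < x := by linarith [hx.1]
      have hx2 : x < 1 := by linarith [hx.2, hβ1]
      exact ((hderiv x ⟨hx1, hx2⟩).continuousAt).continuousWithinAt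
    · intro x hx
      rw [interior_Icc] at hx
      have hx0 : 0 < x := hx.1
      have hx2 : x < 1 := lt_trans hx.2 hβ1
      have hmem : x ∈ Ioo (-1:ℝ) 1 := ⟨by linarith, hx2⟩
      have hx1 : (0:ℝ) < 1 + x := by linarith
      have hx2' : (0:ℝ) < 1 - x := by linarith
      -- deriv f agrees with the explicit derivative near x
      have hev : (fun y => (1+y)⁻¹ + (1-y)⁻¹) =ᶠ[nhds x] deriv f := by
        filter_upwards [Ioo_mem_nhds hmem.1 hmem.2] with y hy
        exact ((hderiv y hy).deriv).symm
      have A : HasDerivAt (fun y : ℝ => 1 + y) 1 x := (hasDerivAt_id x).const_add 1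
      have B : HasDerivAt (fun y : ℝ => 1 - y) (-1) x := (hasDerivAt_id x).const_sub 1
      have hA := A.inv hx1.ne'
      have hB := B.inv hx2'.ne'
      have hsum := hA.add hB
      have hd2 : deriv (deriv f) x = -1/(1+x)^2 + -(-1)/(1-x)^2 := by
        rw [← hev.deriv_eq]
        exact hsum.deriv
      have : deriv^[2] f x = -1/(1+x)^2 + 1/(1-x)^2 := by
        simp only [Function.iterate_succ, Function.iterate_zero, Function.comp_apply, id_eq]
        rw [hd2]; ring
      rw [this]
      have hlt : (1-x)^2 < (1+x)^2 := by nlinarith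
      have hh : 1/(1+x)^2 < 1/(1-x)^2 := by
        apply div_lt_div_of_pos_left one_pos (by positivity) hlt
      have h9 : -1/(1+x)^2 = -(1/(1+x)^2) := by ring
      linarith
  -- chord inequality
  set t : ℝ := α / β with htdef
  have ht0 : 0 < t := div_pos hα0 hβ0
  have ht1 : t < 1 := (div_lt_one hβ0).2 hcon
  have hx0mem : (0:ℝ) ∈ Icc (0:ℝ) β := ⟨le_refl 0, hβ0.le⟩
  have hβmem : β ∈ Icc (0:ℝ) β := ⟨hβ0.le, le_refl β⟩
  have hab : (1 - t) + t = 1 := by ring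
  have hchord := hconv.2 hx0mem hβmem hβ0.ne (show (0:ℝ) < 1 - t by linarith) ht0 hab
  have hcomb : (1-t) • (0:ℝ) + t • β = α := by
    simp only [smul_eq_mul, mul_zero, zero_add, htdef]
    exact div_mul_cancel₀ α hβ0.ne'
  have hf0 : f 0 = 0 := by simp [hfdef]
  rw [hcomb, hf0] at hchord
  simp only [smul_eq_mul, mul_zero, zero_add] at hchord
  have : f α < t * f β := hchord
  have h2 : t * f β ≤ t * (β * L) := mul_le_mul_of_nonneg_left hfβ ht0.le
  have h3 : t * (β * L) = α * L := by
    simp only [htdef]; field_simp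
  rw [hfα] at this
  linarith
end

section
/- For all integers s ≥ 1 and n ≥ 2s + 5 one has (n+2s)/(n−2s) < (n+1)^{2s/n}, where the right-hand side denotes the real power exp((2s/n)·log(n+1)). -/
/-!
Put `t = 2s/n` and `T = (n-5)/n`, so that `0 < t ≤ T < 1` and the claim reads
`log ((1+t)/(1-t)) < t log (n+1)`. The series `log ((1+x)/(1-x)) = 2 ∑ x^(2j+1)/(2j+1)` has
nonnegative coefficients, so `log ((1+x)/(1-x)) / x` is nondecreasing on `(0,1)` and it suffices
to treat the extreme case `t = T`. There the claim becomes the integer inequality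
`(2n-5)^n < 5^n (n+1)^(n-5)`, which follows from `2^n (n+1)^5 < 5^n` for `n ≥ 16` and is checked
directly for `7 ≤ n ≤ 15`.
-/

open Real

theorem mul_log_one_add_div_one_sub_le {t T : ℝ} (ht : 0 ≤ t) (htT : t ≤ T) (hT : T < 1) :
    T * log ((1 + t) / (1 - t)) ≤ t * log ((1 + T) / (1 - T)) := by
  have hseries {x : ℝ} (hx0 : 0 ≤ x) (hx1 : x < 1) :=
    hasSum_log_sub_log_of_abs_lt_one (abs_lt.mpr ⟨by linarith, hx1⟩)
  rw [log_div (by linarith) (by linarith), log_div (by linarith) (by linarith)]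
  refine hasSum_le (fun k => ?_) ((hseries ht (htT.trans_lt hT)).mul_left T)
    ((hseries (ht.trans htT) hT).mul_left t)
  have hpow : t ^ (2 * k) ≤ T ^ (2 * k) := pow_le_pow_left₀ ht htT _
  have hcoef : 0 ≤ t * T * (2 * (1 / (2 * k + 1))) :=
    mul_nonneg (mul_nonneg ht (ht.trans htT)) (by positivity)
  calc T * (2 * (1 / (2 * k + 1)) * t ^ (2 * k + 1))
      = t * T * (2 * (1 / (2 * k + 1))) * t ^ (2 * k) := by ring
    _ ≤ t * T * (2 * (1 / (2 * k + 1))) * T ^ (2 * k) := by gcongr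
    _ = t * (2 * (1 / (2 * k + 1)) * T ^ (2 * k + 1)) := by ring

theorem one_add_div_one_sub_lt_rpow_of_le {t T b : ℝ} (ht : 0 < t) (htT : t ≤ T) (hT : T < 1)
    (hb : 0 < b) (h : (1 + T) / (1 - T) < b ^ T) : (1 + t) / (1 - t) < b ^ t := by
  have hT0 : 0 < T := ht.trans_le htT
  rw [lt_rpow_iff_log_lt (by apply div_pos <;> linarith) hb] at h ⊢
  have hmono := mul_log_one_add_div_one_sub_le ht.le htT hT
  have : T * log ((1 + t) / (1 - t)) < T * (t * log b) := by nlinarith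
  exact lt_of_mul_lt_mul_left this hT0.le

theorem lt_rpow_div_of_pow_lt {a b : ℝ} {k m : ℕ} (hb : 0 ≤ b) (hm : m ≠ 0)
    (h : a ^ m < b ^ k) : a < b ^ ((k : ℝ) / m) := by
  refine lt_of_pow_lt_pow_left₀ m (by positivity) ?_
  rwa [← rpow_natCast (b ^ _) m, ← rpow_mul hb, div_mul_cancel₀ _ (Nat.cast_ne_zero.mpr hm),
    rpow_natCast]

theorem two_pow_mul_succ_pow_five_lt_five_pow {n : ℕ} (hn : 16 ≤ n) :
    2 ^ n * (n + 1) ^ 5 < 5 ^ n := by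
  induction n, hn using Nat.le_induction with
  | base => norm_num
  | succ n hn ih =>
    have hstep : 2 * (n + 2) ^ 5 ≤ 5 * (n + 1) ^ 5 := by
      have hratio : (17 * (n + 2)) ^ 5 ≤ (18 * (n + 1)) ^ 5 := Nat.pow_le_pow_left (by omega) 5
      refine Nat.le_of_mul_le_mul_left ?_ (show 0 < 17 ^ 5 by norm_num)
      calc 17 ^ 5 * (2 * (n + 2) ^ 5) = 2 * (17 * (n + 2)) ^ 5 := by ring
        _ ≤ 2 * (18 * (n + 1)) ^ 5 := by gcongr
        _ ≤ 17 ^ 5 * (5 * (n + 1) ^ 5) := by ring_nf; omega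
    calc 2 ^ (n + 1) * (n + 1 + 1) ^ 5 = 2 ^ n * (2 * (n + 2) ^ 5) := by ring
      _ ≤ 2 ^ n * (5 * (n + 1) ^ 5) := by gcongr
      _ = 5 * (2 ^ n * (n + 1) ^ 5) := by ring
      _ < 5 * 5 ^ n := by gcongr
      _ = 5 ^ (n + 1) := by ring

theorem two_mul_add_five_pow_lt {k : ℕ} (hk : 2 ≤ k) :
    (2 * k + 5) ^ (k + 5) < 5 ^ (k + 5) * (k + 6) ^ k := by
  rcases le_or_gt k 10 with hsmall | hlarge
  · interval_cases k <;> norm_num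
  · calc (2 * k + 5) ^ (k + 5) < (2 * (k + 6)) ^ (k + 5) := by gcongr; omega
      _ = 2 ^ (k + 5) * (k + 5 + 1) ^ 5 * (k + 6) ^ k := by rw [mul_pow, pow_add (k + 6)]; ring
      _ < 5 ^ (k + 5) * (k + 6) ^ k := by
        gcongr
        exact two_pow_mul_succ_pow_five_lt_five_pow (by omega)

/-- For integers `s ≥ 1` and `n ≥ 2s + 5`, `(n+2s)/(n-2s) < (n+1)^(2s/n)`. -/
theorem stmt6 (s n : ℕ) (hs : 1 ≤ s) (hn : 2 * s + 5 ≤ n) :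
    ((n : ℝ) + 2 * s) / ((n : ℝ) - 2 * s) < ((n : ℝ) + 1) ^ (2 * (s : ℝ) / (n : ℝ)) := by
  obtain ⟨k, rfl⟩ : ∃ k, n = k + 5 := ⟨n - 5, by omega⟩
  have hk : (2 * s : ℝ) ≤ k := by exact_mod_cast (by omega : 2 * s ≤ k)
  have hs0 : (0 : ℝ) < s := by exact_mod_cast hs
  push_cast
  have hendpoint :
      (1 + k / (k + 5)) / (1 - k / (k + 5)) < ((k : ℝ) + 5 + 1) ^ ((k : ℝ) / (k + 5)) := by
    rw [show (1 + k / (k + 5)) / (1 - k / (k + 5)) = (2 * (k : ℝ) + 5) / 5 by field_simp; ring]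
    have hpow : ((2 * k + 5) / 5 : ℝ) ^ (k + 5) < ((k : ℝ) + 5 + 1) ^ k := by
      rw [div_pow, div_lt_iff₀ (by positivity)]
      refine lt_of_lt_of_eq (b := (5 : ℝ) ^ (k + 5) * (k + 6) ^ k) ?_ (by ring)
      exact_mod_cast two_mul_add_five_pow_lt (by omega : 2 ≤ k)
    simpa using lt_rpow_div_of_pow_lt (by positivity) (by omega : k + 5 ≠ 0) hpow
  convert one_add_div_one_sub_lt_rpow_of_le (t := 2 * s / (k + 5)) (by positivity)
    (div_le_div_of_nonneg_right hk (by positivity)) ((div_lt_one (by positivity)).mpr (by linarith))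
    (by positivity) hendpoint using 1
  field_simp
end

section
/- Let s ≥ 1 and n > 2s be integers, and set Γ_{n,s} = (∏_{j=0}^{2s−1} (n − 2s + 2j))^{1/s} (this product equals ∏_{j=−s}^{s−1}(n+2j)). Then ∫_{ℝⁿ} (1 + |x|²/Γ_{n,s})^{−(n+2s)/2} dx = Γ_{n,s}^{(n−2s)/2} · 2^{s−1} · (s−1)! · (∏_{i=1}^{s} (n−2i)) · (2π^{n/2}/Γ(n/2)), where the integral is with respect to Lebesgue measure on ℝⁿ, |x| is the Euclidean norm, Γ denotes the Gamma function, and powers with real exponents are real powers of positive reals. -/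
open MeasureTheory

open Set Real Filter Topology

/-!
Write `Γ` for `Γ_{n,s}`. Rescaling `x ↦ √Γ x` turns the integral into
`Γ^{n/2} ∫_{ℝⁿ} (1 + ‖x‖²)^{-(n+2s)/2}`, and polar coordinates reduce this to
`ω_{n-1} J(n, s)` with `J(m, k) = ∫_0^∞ r^{m-1} (1 + r²)^{-(m+2k)/2} dr`. Integrating the
derivative of `r^m (1 + r²)^{-(m+2k)/2}` over `(0, ∞)` gives `J(m, 1) = 1/m` and
`m J(m, k+1) = 2k J(m+2, k)`, hence `J(n, s) = 2^{s-1} (s-1)! / ∏_{j<s} (n + 2j)`.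
Finally `Γ^{n/2} = Γ^{(n-2s)/2} Γ^s`, and `Γ^s` splits as `∏_{i=1}^s (n - 2i) · ∏_{j<s} (n + 2j)`.
-/

theorem Finset.prod_range_two_mul_sub_add {R : Type*} [CommRing R] (x : R) (s : ℕ) :
    ∏ j ∈ Finset.range (2 * s), (x - 2 * s + 2 * j)
      = (∏ i ∈ Finset.Icc 1 s, (x - 2 * i)) * ∏ j ∈ Finset.range s, (x + 2 * j) := by
  rw [two_mul, Finset.prod_range_add, ← Finset.Ico_add_one_right_eq_Icc,
    Finset.prod_Ico_eq_prod_range, Nat.add_sub_cancel, ← Finset.prod_range_reflect]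
  congr 1
  · refine Finset.prod_congr rfl fun j hj => ?_
    have hjs : 1 + j ≤ s := by have := Finset.mem_range.mp hj; omega
    rw [Nat.sub_sub, Nat.cast_add, Nat.cast_sub hjs]
    push_cast
    ring
  · exact Finset.prod_congr rfl fun j _ => by push_cast; ring

theorem integral_comp_norm_sq_div {E F : Type*} [NormedAddCommGroup E] [InnerProductSpace ℝ E]
    [FiniteDimensional ℝ E] [MeasurableSpace E] [BorelSpace E] [NormedAddCommGroup F]
    [NormedSpace ℝ F] (μ : Measure E) [μ.IsAddHaarMeasure] (g : ℝ → F) {c : ℝ} (hc : 0 < c) :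
    ∫ x, g (‖x‖ ^ 2 / c) ∂μ = c ^ ((Module.finrank ℝ E : ℝ) / 2) • ∫ x, g (‖x‖ ^ 2) ∂μ := by
  have hscale : ∀ x : E, ‖x‖ ^ 2 / c = ‖(√c)⁻¹ • x‖ ^ 2 := fun x => by
    rw [norm_smul, mul_pow, norm_inv, Real.norm_of_nonneg (sqrt_nonneg c), inv_pow,
      sq_sqrt hc.le, inv_mul_eq_div]
  simp_rw [hscale]
  rw [Measure.integral_comp_inv_smul_of_nonneg μ (fun x => g (‖x‖ ^ 2)) (sqrt_nonneg c),
    sqrt_eq_rpow, ← rpow_natCast, ← rpow_mul hc.le, one_div_mul_eq_div]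

theorem EuclideanSpace.integral_fun_norm {F : Type*} [NormedAddCommGroup F] [NormedSpace ℝ F]
    {n : ℕ} (hn : 0 < n) (f : ℝ → F) :
    ∫ x : EuclideanSpace ℝ (Fin n), f ‖x‖
      = (2 * π ^ ((n : ℝ) / 2) / Gamma ((n : ℝ) / 2)) • ∫ r in Ioi (0 : ℝ), r ^ (n - 1) • f r := by
  have : Nonempty (Fin n) := ⟨⟨0, hn⟩⟩
  have : Nontrivial (EuclideanSpace ℝ (Fin n)) :=
    Module.nontrivial_of_finrank_pos (R := ℝ) (by rwa [finrank_euclideanSpace_fin])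
  rw [integral_fun_norm_addHaar, finrank_euclideanSpace_fin, Measure.real,
    EuclideanSpace.volume_ball, ← smul_assoc]
  congr 1
  have hn' : (0 : ℝ) < n / 2 := by positivity
  rw [Fintype.card_fin, ENNReal.ofReal_one, one_pow, one_mul,
    ENNReal.toReal_ofReal (by positivity), Gamma_add_one hn'.ne', sqrt_eq_rpow, ← rpow_natCast,
    ← rpow_mul pi_pos.le, nsmul_eq_mul]
  field_simp

theorem continuous_pow_mul_one_add_sq_rpow (k : ℕ) (q : ℝ) :
    Continuous fun r : ℝ => r ^ k * (1 + r ^ 2) ^ q :=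
  (continuous_pow k).mul <|
    (continuous_const.add (continuous_pow 2)).rpow_const fun r =>
      Or.inl (by positivity : (1 : ℝ) + r ^ 2 ≠ 0)

theorem pow_mul_one_add_sq_rpow_neg_le {k : ℕ} {e r : ℝ} (hr : 1 ≤ r) (he : 0 ≤ e) :
    r ^ k * (1 + r ^ 2) ^ (-e) ≤ r ^ ((k : ℝ) - 2 * e) := by
  have hr0 : 0 < r := one_pos.trans_le hr
  calc r ^ k * (1 + r ^ 2) ^ (-e) ≤ r ^ k * (r ^ 2) ^ (-e) := by
        refine mul_le_mul_of_nonneg_left ?_ (by positivity)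
        exact rpow_le_rpow_of_nonpos (by positivity) (by linarith) (by linarith)
    _ = r ^ ((k : ℝ) - 2 * e) := by
        rw [← rpow_natCast r k, ← rpow_natCast r 2, ← rpow_mul hr0.le, ← rpow_add hr0]
        push_cast
        ring_nf

theorem integrableOn_Ioi_pow_mul_one_add_sq_rpow_neg {m : ℕ} (hm : 1 ≤ m) {e : ℝ}
    (he : (m : ℝ) < 2 * e) :
    IntegrableOn (fun r : ℝ => r ^ (m - 1) * (1 + r ^ 2) ^ (-e)) (Ioi 0) := by
  have hcont := continuous_pow_mul_one_add_sq_rpow (m - 1) (-e)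
  have h_near : IntegrableOn (fun r : ℝ => r ^ (m - 1) * (1 + r ^ 2) ^ (-e)) (Ioc 0 1) :=
    (hcont.integrableOn_Icc (a := 0) (b := 1)).mono_set Ioc_subset_Icc_self
  have h_far : IntegrableOn (fun r : ℝ => r ^ (m - 1) * (1 + r ^ 2) ^ (-e)) (Ioi 1) := by
    have hdom : IntegrableOn (fun r : ℝ => r ^ (((m - 1 : ℕ) : ℝ) - 2 * e)) (Ioi 1) :=
      integrableOn_Ioi_rpow_of_lt (by push_cast [Nat.cast_sub hm]; linarith) one_pos
    refine hdom.mono' hcont.aestronglyMeasurable.restrict ?_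
    filter_upwards [ae_restrict_mem measurableSet_Ioi] with r (hr : 1 < r)
    rw [Real.norm_of_nonneg (by positivity)]
    exact pow_mul_one_add_sq_rpow_neg_le hr.le (by linarith [(Nat.cast_nonneg m : (0 : ℝ) ≤ m)])
  rw [← Ioc_union_Ioi_eq_Ioi zero_le_one]
  exact h_near.union h_far

theorem hasDerivAt_pow_mul_one_add_sq_rpow (m : ℕ) (q r : ℝ) :
    HasDerivAt (fun t : ℝ => t ^ m * (1 + t ^ 2) ^ q)
      (m * (r ^ (m - 1) * (1 + r ^ 2) ^ (q - 1))
        + (m + 2 * q) * (r ^ (m + 1) * (1 + r ^ 2) ^ (q - 1))) r := by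
  have h0 : 0 < 1 + r ^ 2 := by positivity
  have hbase : HasDerivAt (fun t : ℝ => 1 + t ^ 2) (2 * r) r := by
    simpa using (hasDerivAt_pow 2 r).const_add 1
  refine ((hasDerivAt_pow m r).mul (hbase.rpow_const (p := q) (Or.inl h0.ne'))).congr_deriv ?_
  rw [show (1 + r ^ 2) ^ q = (1 + r ^ 2) ^ (q - 1) * (1 + r ^ 2) by
    rw [rpow_sub_one h0.ne', div_mul_cancel₀ _ h0.ne']]
  rcases m with _ | m
  · simp only [pow_zero, CharP.cast_eq_zero]
    ring
  · simp only [Nat.add_sub_cancel, Nat.cast_add, Nat.cast_one]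
    ring

theorem tendsto_pow_mul_one_add_sq_rpow_neg_half (m : ℕ) :
    Tendsto (fun r : ℝ => r ^ m * (1 + r ^ 2) ^ (-((m : ℝ) / 2))) atTop (𝓝 1) := by
  have hlim : Tendsto (fun r : ℝ => ((r ^ 2)⁻¹ + 1) ^ (-((m : ℝ) / 2))) atTop (𝓝 1) := by
    have := ((tendsto_pow_atTop two_ne_zero).inv_tendsto_atTop.add_const (1 : ℝ)).rpow_const
      (p := -((m : ℝ) / 2)) (Or.inl (by norm_num))
    simpa using this
  refine hlim.congr' ?_
  filter_upwards [eventually_gt_atTop 0] with r hr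
  have hpow : (r ^ 2) ^ ((m : ℝ) / 2) = r ^ m := by
    rw [← rpow_natCast r 2, ← rpow_mul hr.le, ← rpow_natCast r m]
    congr 1
    push_cast
    ring
  rw [show (r ^ 2)⁻¹ + 1 = (1 + r ^ 2) / r ^ 2 by field_simp,
    div_rpow (by positivity) (by positivity), rpow_neg (sq_nonneg r), hpow, div_inv_eq_mul,
    mul_comm]

theorem tendsto_pow_mul_one_add_sq_rpow_neg_zero (m : ℕ) {c : ℝ} (hc : 0 < c) :
    Tendsto (fun r : ℝ => r ^ m * (1 + r ^ 2) ^ (-(((m : ℝ) + c) / 2))) atTop (𝓝 0) := by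
  refine squeeze_zero' ?_ ?_ (tendsto_rpow_neg_atTop hc)
  · filter_upwards [eventually_gt_atTop 0] with r hr
    positivity
  · filter_upwards [eventually_ge_atTop 1] with r hr
    exact (pow_mul_one_add_sq_rpow_neg_le hr (by positivity)).trans_eq
      (congrArg (r ^ ·) (by ring))

theorem integral_Ioi_deriv_pow_mul_one_add_sq_rpow {m : ℕ} (hm : 1 ≤ m) {q L : ℝ}
    (hint : IntegrableOn (fun r : ℝ => m * (r ^ (m - 1) * (1 + r ^ 2) ^ (q - 1))
      + (m + 2 * q) * (r ^ (m + 1) * (1 + r ^ 2) ^ (q - 1))) (Ioi 0))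
    (hL : Tendsto (fun r : ℝ => r ^ m * (1 + r ^ 2) ^ q) atTop (𝓝 L)) :
    ∫ r in Ioi (0 : ℝ), (m * (r ^ (m - 1) * (1 + r ^ 2) ^ (q - 1))
      + (m + 2 * q) * (r ^ (m + 1) * (1 + r ^ 2) ^ (q - 1))) = L := by
  rw [integral_Ioi_of_hasDerivAt_of_tendsto'
    (fun r _ => hasDerivAt_pow_mul_one_add_sq_rpow m q r) hint hL]
  simp [zero_pow (Nat.one_le_iff_ne_zero.mp hm)]

theorem integral_Ioi_pow_mul_one_add_sq_rpow_neg_add_one {m : ℕ} (hm : 1 ≤ m) :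
    ∫ r in Ioi (0 : ℝ), r ^ (m - 1) * (1 + r ^ 2) ^ (-(((m : ℝ) + 2) / 2)) = (m : ℝ)⁻¹ := by
  have hm0 : (m : ℝ) ≠ 0 := by positivity
  have hexp : -((m : ℝ) / 2) - 1 = -(((m : ℝ) + 2) / 2) := by ring
  have hcoef : (m : ℝ) + 2 * -((m : ℝ) / 2) = 0 := by ring
  have h := integral_Ioi_deriv_pow_mul_one_add_sq_rpow hm (q := -((m : ℝ) / 2))
    ?_ (tendsto_pow_mul_one_add_sq_rpow_neg_half m)
  · simp only [hexp, hcoef, zero_mul, add_zero, integral_const_mul] at h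
    field_simp
    linear_combination h
  · simp only [hexp, hcoef, zero_mul, add_zero]
    exact (integrableOn_Ioi_pow_mul_one_add_sq_rpow_neg hm (by linarith)).const_mul _

theorem mul_integral_Ioi_pow_mul_one_add_sq_rpow_neg {m : ℕ} (hm : 1 ≤ m) {k : ℝ}
    (hk : 0 < k) :
    m * ∫ r in Ioi (0 : ℝ), r ^ (m - 1) * (1 + r ^ 2) ^ (-(((m : ℝ) + 2 * (k + 1)) / 2))
      = 2 * k * ∫ r in Ioi (0 : ℝ),
          r ^ (m + 1) * (1 + r ^ 2) ^ (-(((m : ℝ) + 2 * (k + 1)) / 2)) := by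
  have hexp : -(((m : ℝ) + 2 * k) / 2) - 1 = -(((m : ℝ) + 2 * (k + 1)) / 2) := by ring
  have hcoef : (m : ℝ) + 2 * -(((m : ℝ) + 2 * k) / 2) = -(2 * k) := by ring
  have hA := integrableOn_Ioi_pow_mul_one_add_sq_rpow_neg hm
    (e := ((m : ℝ) + 2 * (k + 1)) / 2) (by linarith)
  have hB : IntegrableOn
      (fun r : ℝ => r ^ (m + 1) * (1 + r ^ 2) ^ (-(((m : ℝ) + 2 * (k + 1)) / 2))) (Ioi 0) :=
    integrableOn_Ioi_pow_mul_one_add_sq_rpow_neg (m := m + 2) (by omega) (by push_cast; linarith)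
  have h := integral_Ioi_deriv_pow_mul_one_add_sq_rpow hm (q := -(((m : ℝ) + 2 * k) / 2))
    ?_ (tendsto_pow_mul_one_add_sq_rpow_neg_zero m (by positivity : 0 < 2 * k))
  · simp only [hexp, hcoef] at h
    rw [integral_add (hA.const_mul _) (hB.const_mul _), integral_const_mul,
      integral_const_mul] at h
    linear_combination h
  · simp only [hexp, hcoef]
    exact (hA.const_mul _).add (hB.const_mul _)

theorem integral_Ioi_pow_mul_one_add_sq_rpow_neg (t : ℕ) {m : ℕ} (hm : 1 ≤ m) :
    ∫ r in Ioi (0 : ℝ), r ^ (m - 1) * (1 + r ^ 2) ^ (-(((m : ℝ) + 2 * (t + 1)) / 2))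
      = 2 ^ t * t.factorial / ∏ j ∈ Finset.range (t + 1), ((m : ℝ) + 2 * j) := by
  induction t generalizing m with
  | zero => simpa using integral_Ioi_pow_mul_one_add_sq_rpow_neg_add_one hm
  | succ t ih =>
    have hrec :=
      mul_integral_Ioi_pow_mul_one_add_sq_rpow_neg hm (k := ((t + 1 : ℕ) : ℝ)) (by positivity)
    have hnext := ih (m := m + 2) (by omega)
    have hexp : ((m + 2 : ℕ) : ℝ) + 2 * ((t : ℝ) + 1) = m + 2 * (((t + 1 : ℕ) : ℝ) + 1) := by
      push_cast
      ring
    rw [hexp, show m + 2 - 1 = m + 1 from rfl] at hnext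
    rw [hnext] at hrec
    have hprod : ∏ j ∈ Finset.range (t + 1 + 1), ((m : ℝ) + 2 * j)
        = (∏ j ∈ Finset.range (t + 1), (((m + 2 : ℕ) : ℝ) + 2 * j)) * m := by
      rw [Finset.prod_range_succ']
      push_cast
      congr 1
      · exact Finset.prod_congr rfl fun j _ => by ring
      · ring
    have hm0 : (m : ℝ) ≠ 0 := by positivity
    have hP : ∏ j ∈ Finset.range (t + 1), (((m + 2 : ℕ) : ℝ) + 2 * j) ≠ 0 :=
      Finset.prod_ne_zero_iff.mpr fun j _ => by positivity
    rw [hprod, Nat.factorial_succ]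
    push_cast at hP hrec ⊢
    field_simp at hrec ⊢
    linear_combination hrec

theorem EuclideanSpace.integral_one_add_norm_sq_rpow_neg (t : ℕ) {n : ℕ} (hn : 0 < n) :
    ∫ x : EuclideanSpace ℝ (Fin n), (1 + ‖x‖ ^ 2) ^ (-(((n : ℝ) + 2 * (t + 1)) / 2))
      = 2 * π ^ ((n : ℝ) / 2) / Gamma ((n : ℝ) / 2)
        * (2 ^ t * t.factorial / ∏ j ∈ Finset.range (t + 1), ((n : ℝ) + 2 * j)) := by
  rw [EuclideanSpace.integral_fun_norm hn fun r => (1 + r ^ 2) ^ (-(((n : ℝ) + 2 * (t + 1)) / 2))]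
  simp only [smul_eq_mul, integral_Ioi_pow_mul_one_add_sq_rpow_neg t hn]

/-- Energy identity for the standard bubble:
`∫_{ℝⁿ} (1 + |x|²/Γ_{n,s})^{-(n+2s)/2} dx
  = Γ_{n,s}^{(n-2s)/2} · 2^{s-1} (s-1)! (∏_{i=1}^s (n-2i)) · (2π^{n/2}/Γ(n/2))`,
where `Γ_{n,s} = (∏_{j=0}^{2s-1} (n - 2s + 2j))^{1/s}`. -/
theorem stmt8 (s n : ℕ) (hs : 1 ≤ s) (hn : 2 * s < n) :
    (∫ x : EuclideanSpace ℝ (Fin n),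
        (1 + ‖x‖ ^ 2 / ((∏ j ∈ Finset.range (2 * s), ((n : ℝ) - 2 * s + 2 * j)) ^ ((1 : ℝ) / s)))
          ^ (-(((n : ℝ) + 2 * s) / 2)))
      = ((∏ j ∈ Finset.range (2 * s), ((n : ℝ) - 2 * s + 2 * j)) ^ ((1 : ℝ) / s))
            ^ (((n : ℝ) - 2 * s) / 2)
        * 2 ^ (s - 1) * (Nat.factorial (s - 1))
        * (∏ i ∈ Finset.Icc 1 s, ((n : ℝ) - 2 * i))
        * (2 * Real.pi ^ ((n : ℝ) / 2) / Real.Gamma ((n : ℝ) / 2)) := by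
  obtain ⟨t, rfl⟩ : ∃ t, s = t + 1 := ⟨s - 1, by omega⟩
  have hns : 2 * ((t : ℝ) + 1) < n := by exact_mod_cast hn
  rw [Finset.prod_range_two_mul_sub_add]
  simp only [Nat.cast_add, Nat.cast_one, Nat.add_sub_cancel]
  set R := ∏ i ∈ Finset.Icc 1 (t + 1), ((n : ℝ) - 2 * i)
  set Q := ∏ j ∈ Finset.range (t + 1), ((n : ℝ) + 2 * j) with hQ_def
  have hR : 0 < R := Finset.prod_pos fun i hi => by
    have : (i : ℝ) ≤ t + 1 := by exact_mod_cast (Finset.mem_Icc.mp hi).2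
    linarith
  have hQ : 0 < Q := Finset.prod_pos fun j _ => by linarith [(j.cast_nonneg : (0 : ℝ) ≤ j)]
  set G := (R * Q) ^ ((1 : ℝ) / (t + 1))
  have hG : 0 < G := rpow_pos_of_pos (mul_pos hR hQ) _
  have hGn : G ^ ((n : ℝ) / 2) = G ^ (((n : ℝ) - 2 * (t + 1)) / 2) * (R * Q) := by
    have hGs : G ^ ((t : ℝ) + 1) = R * Q := by
      rw [← rpow_mul (mul_pos hR hQ).le, one_div_mul_cancel (by positivity), rpow_one]
    rw [← hGs, ← rpow_add hG]
    ring_nf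
  have hΓ : 0 < Gamma ((n : ℝ) / 2) := Gamma_pos_of_pos (by linarith)
  rw [integral_comp_norm_sq_div volume (fun u => (1 + u) ^ (-(((n : ℝ) + 2 * (t + 1)) / 2))) hG,
    finrank_euclideanSpace_fin, EuclideanSpace.integral_one_add_norm_sq_rpow_neg t (by omega),
    smul_eq_mul, hGn, ← hQ_def]
  field_simp
end
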